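/- Let Σ ∈ ℝ^{d×d} be a circulant positive semidefinite covariance matrix with eigenvalues (λ_k)_{k=0}^{d−1} in the discrete Fourier basis, let ω = e^{2πi/d}, fix σ > 0, and define h_k := σ²/(λ_k + σ²) and q_r := (1/d) Σ_{k=0}^{d−1} h_k ω^{rk}. Define the cyclic total variation TV(h) := Σ_{k=0}^{d−1} |h_{k+1} − h_k| with indices taken modulo d. Then for all n ∈ {1, …, ⌊d/2⌋}, |q_n| ≤ TV(h)/(4n); consequently, for i ≠ j at wrap-around distance n, the denoiser sensitivity satisfies |∂[m_σ]_i/∂x_j| ≤ TV(h)/(4n). -/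

import Mathlib

/-!
Every circulant matrix is diagonalised by the Fourier vectors `F_k = (ω^{jk})_j`, and the
circulant matrix `Q` with first column `q` (the inverse DFT of `h`) has eigenvalue `h_k` on `F_k`.
Comparing eigenvalues on this basis gives `Σ(Σ + σ²I)⁻¹ = I − Q`, so the off-diagonal Jacobian
entries are `−q_{(i−j) mod d}`, and `(i − j) mod d` is `n` or `d − n`.

The bound on `q_r` is Abel summation: for `z = ω^r`,
`(z − 1) Σ_k h_k z^k = Σ_k (h_k − h_{k+1}) z^{k+1}`, hence `d |z − 1| |q_r| ≤ TV(h)`.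
Finally `|ω^n − 1| = |ω^{d−n} − 1| = 2 sin(πn/d) ≥ 4n/d` by Jordan's inequality.
-/

noncomputable section

/-- The primitive `d`-th root of unity `ω = e^{2πi/d}`. -/
def dftOmega (d : ℕ) : ℂ := Complex.exp (2 * Real.pi * Complex.I / d)

/-- The Fourier vector `(ω^{jk})_j` with frequency `k`. -/
def fourierVec (d : ℕ) (k : Fin d) : Fin d → ℂ := fun j => dftOmega d ^ ((j : ℕ) * (k : ℕ))

/-- `q_r = (1/d) Σ_k h_k ω^{rk}`, the inverse DFT of `h` evaluated at `r`. -/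
def qCoef (d : ℕ) (h : Fin d → ℝ) (r : ℕ) : ℂ :=
  (d : ℂ)⁻¹ * ∑ k : Fin d, (h k : ℂ) * dftOmega d ^ (r * (k : ℕ))

/-- The cyclic total variation `TV(h) = Σ_k |h_{k+1} − h_k|` (indices mod `d`). -/
def cyclicTV {d : ℕ} (h : Fin d → ℝ) : ℝ :=
  ∑ k : Fin d, |h ⟨((k : ℕ) + 1) % d, Nat.mod_lt _ k.pos⟩ - h k|

/-- The wrap-around distance `min{|i−j|, d−|i−j|}` between indices `i, j` of `Fin d`. -/
def wrapDist {d : ℕ} (i j : Fin d) : ℕ :=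
  min ((i : ℤ) - (j : ℤ)).natAbs (d - ((i : ℤ) - (j : ℤ)).natAbs)

section

open Complex Finset Matrix

variable {d : ℕ}

lemma fourierVec_comm (k j : Fin d) : fourierVec d k j = fourierVec d j k := by
  simp only [fourierVec, mul_comm]

lemma val_sub_eq_or_of_wrapDist_eq {i j : Fin d} {n : ℕ} (h : wrapDist i j = n) :
    ((i - j : Fin d) : ℕ) = n ∨ ((i - j : Fin d) : ℕ) = d - n := by
  unfold wrapDist at h
  rcases le_or_gt j i with hji | hij
  · rw [Fin.coe_sub_iff_le.mpr hji]
    omega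
  · rw [Fin.coe_sub_iff_lt.mpr hij]
    omega

lemma ne_zero_of_mulVec_eq_smul {n K : Type*} [Fintype n] [DecidableEq n] [Field K]
    {M : Matrix n n K} (hM : M.det ≠ 0) {μ : K} {x : n → K} (hx : x ≠ 0)
    (h : M *ᵥ x = μ • x) : μ ≠ 0 := by
  rintro rfl
  exact hx (eq_zero_of_mulVec_eq_zero hM (by rwa [zero_smul] at h))

variable [NeZero d]

lemma isPrimitiveRoot_dftOmega : IsPrimitiveRoot (dftOmega d) d :=
  Complex.isPrimitiveRoot_exp d (NeZero.ne d)

lemma dftOmega_pow_self : dftOmega d ^ d = 1 :=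
  isPrimitiveRoot_dftOmega.pow_eq_one

lemma dftOmega_pow_mod (a : ℕ) : dftOmega d ^ (a % d) = dftOmega d ^ a :=
  (pow_eq_pow_mod a dftOmega_pow_self).symm

lemma fourierVec_add (k a b : Fin d) :
    fourierVec d k (a + b) = fourierVec d k a * fourierVec d k b := by
  simp only [fourierVec, pow_mul, Fin.val_add, dftOmega_pow_mod, pow_add, mul_pow]

lemma fourierVec_zero (k : Fin d) : fourierVec d k 0 = 1 := by
  simp [fourierVec]

lemma fourierVec_ne_zero (k : Fin d) : fourierVec d k ≠ 0 :=
  fun h => one_ne_zero ((fourierVec_zero k).symm.trans (congrFun h 0))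

lemma fourierVec_neg (k a : Fin d) : fourierVec d k (-a) = fourierVec d (-k) a := by
  have hk : fourierVec d k (-a) * fourierVec d k a = 1 := by
    rw [← fourierVec_add, neg_add_cancel, fourierVec_zero]
  have hnk : fourierVec d (-k) a * fourierVec d k a = 1 := by
    rw [fourierVec_comm _ a, fourierVec_comm k, ← fourierVec_add, neg_add_cancel, fourierVec_zero]
  exact mul_right_cancel₀ (pow_ne_zero _ (Complex.exp_ne_zero _)) (hk.trans hnk.symm)

lemma sum_fourierVec (a : Fin d) :
    ∑ k : Fin d, fourierVec d k a = if a = 0 then (d : ℂ) else 0 := by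
  simp only [fourierVec, pow_mul]
  rw [Fin.sum_univ_eq_sum_range (fun k => (dftOmega d ^ (a : ℕ)) ^ k)]
  split_ifs with ha
  · simp [ha]
  · have hne : dftOmega d ^ (a : ℕ) ≠ 1 :=
      isPrimitiveRoot_dftOmega.pow_ne_one_of_pos_of_lt (Fin.val_ne_zero_iff.mpr ha) a.isLt
    rw [geom_sum_eq hne, ← pow_mul, mul_comm, pow_mul, dftOmega_pow_self, one_pow, sub_self,
      zero_div]

lemma ext_of_mulVec_fourierVec {M N : Matrix (Fin d) (Fin d) ℂ}
    (h : ∀ k, M *ᵥ fourierVec d k = N *ᵥ fourierVec d k) : M = N := by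
  rw [← sub_eq_zero]
  funext i
  refine eq_zero_of_forall_pow_sum_mul_pow_eq_zero (f := fun l : Fin d => dftOmega d ^ (l : ℕ))
    (fun a b hab => Fin.ext (isPrimitiveRoot_dftOmega.pow_inj a.isLt b.isLt hab)) fun k => ?_
  have hk := congrFun (h k) i
  simp only [mulVec, dotProduct, fourierVec, pow_mul] at hk
  simp only [Matrix.sub_apply, sub_mul, Finset.sum_sub_distrib, hk, sub_self]

lemma circulant_mulVec_fourierVec (c : Fin d → ℂ) (k : Fin d) :
    circulant c *ᵥ fourierVec d k = (∑ r, c r * fourierVec d k (-r)) • fourierVec d k := by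
  ext i
  calc (circulant c *ᵥ fourierVec d k) i = ∑ r, c r * fourierVec d k (i - r) := by
        simp only [mulVec, dotProduct, circulant_apply]
        exact Fintype.sum_equiv (Equiv.subLeft i) _ _ fun j => by simp
    _ = _ := by
        simp only [sub_eq_add_neg, fourierVec_add, Pi.smul_apply, smul_eq_mul, Finset.sum_mul]
        exact Finset.sum_congr rfl fun r _ => by ring

lemma circulant_qCoef_mulVec_fourierVec (h : Fin d → ℝ) (k : Fin d) :
    circulant (fun r : Fin d => qCoef d h r) *ᵥ fourierVec d k = (h k : ℂ) • fourierVec d k := by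
  rw [circulant_mulVec_fourierVec]
  congr 1
  have orth (l : Fin d) : ∑ r : Fin d, fourierVec d l r * fourierVec d k (-r)
      = if l = k then (d : ℂ) else 0 := by
    simp_rw [← sub_eq_zero (a := l), ← sum_fourierVec]
    refine Finset.sum_congr rfl fun r _ => ?_
    rw [fourierVec_neg, fourierVec_comm l, fourierVec_comm (-k), ← fourierVec_add, sub_eq_add_neg]
  calc ∑ r : Fin d, qCoef d h r * fourierVec d k (-r)
      = (d : ℂ)⁻¹ * ∑ l, (h l : ℂ) * ∑ r : Fin d, fourierVec d l r * fourierVec d k (-r) := by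
        simp only [qCoef, Finset.mul_sum, Finset.sum_mul]
        rw [Finset.sum_comm]
        exact Finset.sum_congr rfl fun l _ => Finset.sum_congr rfl fun r _ => by
          simp only [fourierVec]; ring
    _ = h k := by
        have hd : (d : ℂ) ≠ 0 := Nat.cast_ne_zero.mpr (NeZero.ne d)
        simp only [orth, mul_ite, mul_zero, Finset.sum_ite_eq', Finset.mem_univ, if_true]
        field_simp

lemma cyclicTV_eq_sum_abs (h : Fin d → ℝ) : cyclicTV h = ∑ k, |h (k + 1) - h k| := by
  refine Finset.sum_congr rfl fun k _ => ?_
  congr 3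
  ext
  simp [Fin.val_add, Nat.add_mod]

lemma norm_sub_one_mul_sum_le {z : ℂ} (hz : z ^ d = 1) (h : Fin d → ℝ) :
    ‖z - 1‖ * ‖∑ k, (h k : ℂ) * z ^ (k : ℕ)‖ ≤ cyclicTV h := by
  have hz1 : ‖z‖ = 1 := norm_eq_one_of_pow_eq_one hz (NeZero.ne d)
  have hshift (k : Fin d) : z ^ ((k + 1 : Fin d) : ℕ) = z ^ ((k : ℕ) + 1) := by
    rw [Fin.val_add, Fin.val_one', Nat.add_mod_mod, ← pow_eq_pow_mod _ hz]
  have hS : (z - 1) * ∑ k, (h k : ℂ) * z ^ (k : ℕ)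
      = ∑ k, ((h k : ℂ) - h (k + 1)) * z ^ ((k : ℕ) + 1) := by
    have hrot : ∑ k, (h (k + 1) : ℂ) * z ^ ((k : ℕ) + 1) = ∑ k, (h k : ℂ) * z ^ (k : ℕ) := by
      simp_rw [← hshift]
      exact Equiv.sum_comp (Equiv.addRight (1 : Fin d)) fun k => (h k : ℂ) * z ^ (k : ℕ)
    rw [sub_mul, Finset.mul_sum, one_mul, ← hrot, ← Finset.sum_sub_distrib]
    exact Finset.sum_congr rfl fun k _ => by ring
  rw [← norm_mul, hS, cyclicTV_eq_sum_abs]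
  refine (norm_sum_le _ _).trans (Finset.sum_le_sum fun k _ => ?_)
  rw [norm_mul, norm_pow, hz1, one_pow, mul_one, ← ofReal_sub, norm_real, Real.norm_eq_abs,
    abs_sub_comm]

lemma four_mul_le_mul_norm_dftOmega_pow_sub_one {n : ℕ} (hn : 2 * n ≤ d) :
    4 * (n : ℝ) ≤ d * ‖dftOmega d ^ n - 1‖ := by
  have hd : (0 : ℝ) < d := by simp [Nat.pos_of_neZero]
  set x : ℝ := Real.pi * n / d with hx_def
  have hx0 : 0 ≤ x := by positivity
  have hx : x ≤ Real.pi / 2 := by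
    have h2n : (2 * n : ℝ) ≤ d := by exact_mod_cast hn
    rw [hx_def, div_le_div_iff₀ hd two_pos]
    nlinarith [Real.pi_pos]
  have hpow : dftOmega d ^ n = exp (I * ↑(2 * x)) := by
    rw [dftOmega, ← Complex.exp_nat_mul]
    congr 1
    push_cast [x]
    ring
  have hsin := Real.mul_le_sin hx0 hx
  have hsin0 : 0 ≤ 2 * Real.sin x :=
    mul_nonneg zero_le_two (Real.sin_nonneg_of_nonneg_of_le_pi hx0 (by linarith [Real.pi_pos]))
  rw [hpow, norm_exp_I_mul_ofReal_sub_one, mul_div_cancel_left₀ _ two_ne_zero,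
    Real.norm_eq_abs, abs_of_nonneg hsin0]
  calc 4 * (n : ℝ) = d * (2 * (2 / Real.pi * x)) := by rw [hx_def]; field_simp; ring
    _ ≤ d * (2 * Real.sin x) := by gcongr

lemma norm_dftOmega_pow_sub_sub_one {n : ℕ} (hn : n ≤ d) :
    ‖dftOmega d ^ (d - n) - 1‖ = ‖dftOmega d ^ n - 1‖ := by
  have hnorm : ‖dftOmega d‖ = 1 := norm_eq_one_of_pow_eq_one dftOmega_pow_self (NeZero.ne d)
  have hprod : dftOmega d ^ (d - n) * dftOmega d ^ n = 1 := by
    rw [← pow_add, Nat.sub_add_cancel hn, dftOmega_pow_self]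
  calc ‖dftOmega d ^ (d - n) - 1‖ = ‖dftOmega d ^ (d - n) * (1 - dftOmega d ^ n)‖ := by
        rw [mul_sub, mul_one, hprod]
    _ = ‖dftOmega d ^ n - 1‖ := by rw [norm_mul, norm_pow, hnorm, one_pow, one_mul, norm_sub_rev]

lemma mul_norm_qCoef_le (h : Fin d → ℝ) (r : ℕ) :
    d * ‖dftOmega d ^ r - 1‖ * ‖qCoef d h r‖ ≤ cyclicTV h := by
  have hd : (d : ℝ) ≠ 0 := Nat.cast_ne_zero.mpr (NeZero.ne d)
  have hz : (dftOmega d ^ r) ^ d = 1 := by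
    rw [← pow_mul, mul_comm, pow_mul, dftOmega_pow_self, one_pow]
  calc d * ‖dftOmega d ^ r - 1‖ * ‖qCoef d h r‖
      = ‖dftOmega d ^ r - 1‖ * ‖∑ k, (h k : ℂ) * (dftOmega d ^ r) ^ (k : ℕ)‖ := by
        simp only [qCoef, pow_mul, norm_mul, norm_inv, norm_natCast]
        field_simp
    _ ≤ cyclicTV h := norm_sub_one_mul_sum_le hz h

lemma norm_qCoef_le (h : Fin d → ℝ) {n r : ℕ} (hn : 0 < n) (h2n : 2 * n ≤ d)
    (hr : r = n ∨ r = d - n) : ‖qCoef d h r‖ ≤ cyclicTV h / (4 * n) := by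
  have hnorm : 4 * (n : ℝ) ≤ d * ‖dftOmega d ^ r - 1‖ := by
    rcases hr with rfl | rfl
    · exact four_mul_le_mul_norm_dftOmega_pow_sub_one h2n
    · rw [norm_dftOmega_pow_sub_sub_one (by omega)]
      exact four_mul_le_mul_norm_dftOmega_pow_sub_one h2n
  rw [le_div_iff₀ (by positivity), mul_comm]
  exact (mul_le_mul_of_nonneg_right hnorm (norm_nonneg _)).trans (mul_norm_qCoef_le h r)

lemma circulant_mul_inv_map_ofReal (v : Fin d → ℝ)
    (hPSD : (circulant v).PosSemidef) (lam : Fin d → ℝ)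
    (hlam : ∀ k : Fin d, ((circulant v).map ofReal) *ᵥ fourierVec d k =
      fun j => (lam k : ℂ) * fourierVec d k j)
    {σ : ℝ} (hσ : σ ≠ 0) :
    (circulant v * (circulant v + σ ^ 2 • (1 : Matrix (Fin d) (Fin d) ℝ))⁻¹).map ofReal
      = 1 - circulant fun r : Fin d => qCoef d (fun k => σ ^ 2 / (lam k + σ ^ 2)) r := by
  set A := circulant v
  set B := A + σ ^ 2 • (1 : Matrix (Fin d) (Fin d) ℝ)
  have hB : B.det ≠ 0 := (PosDef.posSemidef_add hPSD (PosDef.one.smul (by positivity))).det_pos.ne'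
  have hBc : (B.map ofReal).det ≠ 0 := by
    rw [show B.map ofReal = ofRealHom.mapMatrix B from rfl, ← RingHom.map_det]
    exact ofReal_ne_zero.mpr hB
  have hBF (k : Fin d) :
      B.map ofReal *ᵥ fourierVec d k = ((lam k : ℂ) + σ ^ 2) • fourierVec d k := by
    have hmap : B.map ofReal = A.map ofReal + ((σ : ℂ) ^ 2) • 1 := by
      ext i j
      by_cases hij : i = j <;> simp [B, one_apply, hij]
    rw [hmap, add_mulVec, hlam, smul_mulVec, one_mulVec, add_smul]
    rfl
  have hMB : (A * B⁻¹).map ofReal * B.map ofReal = A.map ofReal := by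
    change (A * B⁻¹).map ofRealHom * B.map ofRealHom = A.map ofRealHom
    rw [← Matrix.map_mul, nonsing_inv_mul_cancel_right _ _ (isUnit_iff_ne_zero.mpr hB)]
  refine ext_of_mulVec_fourierVec fun k => ?_
  have hne := ne_zero_of_mulVec_eq_smul hBc (fourierVec_ne_zero k) (hBF k)
  have hMF := congrArg (· *ᵥ fourierVec d k) hMB
  simp only [← mulVec_mulVec, hBF, mulVec_smul, hlam] at hMF
  rw [sub_mulVec, one_mulVec, circulant_qCoef_mulVec_fourierVec,
    ← inv_smul_smul₀ hne ((A * B⁻¹).map ofReal *ᵥ fourierVec d k), hMF]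
  ext j
  simp only [Pi.smul_apply, Pi.sub_apply, smul_eq_mul]
  push_cast
  field_simp
  ring

end

theorem circulant_sensitivity_decay_general {d : ℕ} (v : Fin d → ℝ)
    (hPSD : (Matrix.circulant v).PosSemidef)
    (lam : Fin d → ℝ)
    (hlam : ∀ k : Fin d,
      ((Matrix.circulant v).map (Complex.ofReal)).mulVec (fourierVec d k) =
        fun j => (lam k : ℂ) * fourierVec d k j)
    (σ : ℝ) (hσ : 0 < σ) :
    ∀ n : ℕ, 1 ≤ n → n ≤ d / 2 →
      ‖qCoef d (fun k => σ ^ 2 / (lam k + σ ^ 2)) n‖ ≤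
        cyclicTV (fun k => σ ^ 2 / (lam k + σ ^ 2)) / (4 * n) ∧
      ∀ i j : Fin d, i ≠ j → wrapDist i j = n →
        |(Matrix.circulant v *
            (Matrix.circulant v + σ ^ 2 • (1 : Matrix (Fin d) (Fin d) ℝ))⁻¹) i j| ≤
          cyclicTV (fun k => σ ^ 2 / (lam k + σ ^ 2)) / (4 * n) := by
  intro n hn hnd
  have h2n : 2 * n ≤ d := by omega
  have : NeZero d := ⟨by omega⟩
  refine ⟨norm_qCoef_le _ hn h2n (Or.inl rfl), fun i j hij hdist => ?_⟩
  have hentry := congrFun (congrFun (circulant_mul_inv_map_ofReal v hPSD lam hlam hσ.ne') i) j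
  rw [Matrix.map_apply, Matrix.sub_apply, Matrix.one_apply_ne hij, Matrix.circulant_apply,
    zero_sub] at hentry
  rw [← Real.norm_eq_abs, ← Complex.norm_real, hentry, norm_neg]
  exact norm_qCoef_le _ hn h2n (val_sub_eq_or_of_wrapDist_eq hdist)

/-- for a circulant positive semidefinite `Σ` with eigenvalues `λ_k` in the discrete
Fourier basis, `σ > 0`, and `h_k = σ²/(λ_k + σ²)`, for all `n ∈ {1, …, ⌊d/2⌋}` one has
`|q_n| ≤ TV(h)/(4n)`; consequently, for `i ≠ j` at wrap-around distance `n`, the sensitivity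
(the `(i,j)` entry of the Jacobian `Σ(Σ + σ²I)⁻¹`) is at most `TV(h)/(4n)`. -/
theorem circulant_sensitivity_decay {d : ℕ} (hd : 2 ≤ d) (v : Fin d → ℝ)
    (hPSD : (Matrix.circulant v).PosSemidef)
    (lam : Fin d → ℝ)
    (hlam : ∀ k : Fin d,
      ((Matrix.circulant v).map (Complex.ofReal)).mulVec (fourierVec d k) =
        fun j => (lam k : ℂ) * fourierVec d k j)
    (σ : ℝ) (hσ : 0 < σ) :
    ∀ n : ℕ, 1 ≤ n → n ≤ d / 2 →
      ‖qCoef d (fun k => σ ^ 2 / (lam k + σ ^ 2)) n‖ ≤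
        cyclicTV (fun k => σ ^ 2 / (lam k + σ ^ 2)) / (4 * n) ∧
      ∀ i j : Fin d, i ≠ j → wrapDist i j = n →
        |(Matrix.circulant v *
            (Matrix.circulant v + σ ^ 2 • (1 : Matrix (Fin d) (Fin d) ℝ))⁻¹) i j| ≤
          cyclicTV (fun k => σ ^ 2 / (lam k + σ ^ 2)) / (4 * n) :=
  circulant_sensitivity_decay_general v hPSD lam hlam σ hσ

end
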